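/- If F : 𝔹₂ → 𝔻 is holomorphic and satisfies F(z₁,0) = z₁ for all z₁ ∈ 𝔻, then for every z₂ ∈ 𝔻 one has |F(0,z₂)| ≤ |z₂|²/(2 − |z₂|²). -/

import Mathlib

open Metric Set Complex

noncomputable section

/-- `ℂⁿ` with the Euclidean norm; `𝔹ₙ` is `Metric.ball 0 1` in this space. -/
abbrev En (n : ℕ) := EuclideanSpace ℂ (Fin n)

/-- The Möbius map `m_a` interchanging `0` and `a`. -/
def mob (a z : ℂ) : ℂ := (a - z) / (1 - (starRingEnd ℂ) a * z)

/-- A Blaschke product of degree `k`: `z ↦ η * ∏ j, m_{α j}(z)` with `|η| = 1`, `α j ∈ 𝔻`. -/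
def IsBlaschke (k : ℕ) (B : ℂ → ℂ) : Prop :=
  ∃ η : ℂ, ‖η‖ = 1 ∧ ∃ α : Fin k → ℂ, (∀ j, α j ∈ ball (0 : ℂ) 1) ∧
    ∀ z : ℂ, B z = η * ∏ j, mob (α j) z

/-- The Pick problem `𝔹ₙ → 𝔻`, `z j ↦ lam j`, is extremal: it is solvable by a holomorphic
map `𝔹ₙ → 𝔻`, but by no holomorphic solution with `sup_{𝔹ₙ} |G| < 1`. -/
def ExtremalPick {n : ℕ} {ι : Type} (z : ι → En n) (lam : ι → ℂ) : Prop :=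
  (∃ F : En n → ℂ, DifferentiableOn ℂ F (ball 0 1) ∧
      MapsTo F (ball (0 : En n) 1) (ball (0 : ℂ) 1) ∧ ∀ j, F (z j) = lam j) ∧
  ¬ ∃ G : En n → ℂ, DifferentiableOn ℂ G (ball 0 1) ∧ (∀ j, G (z j) = lam j) ∧
      ∃ r : ℝ, r < 1 ∧ ∀ x ∈ ball (0 : En n) 1, ‖G x‖ ≤ r

/-- An extremal 3-point Pick problem is non-degenerate if no 2-point subproblem is extremal. -/
def ExtremalPick3Nondeg {n : ℕ} (z : Fin 3 → En n) (lam : Fin 3 → ℂ) : Prop :=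
  ExtremalPick z lam ∧
    ∀ i j : Fin 3, i ≠ j → ¬ ExtremalPick ![z i, z j] ![lam i, lam j]

/-- `ℬ(w)`: values at `w` of holomorphic maps `F : 𝔹₂ → 𝔻` with `F(z₁,0) = z₁` on `𝔻`. -/
def Bset (w : En 2) : Set ℂ :=
  {σ | ∃ F : En 2 → ℂ, DifferentiableOn ℂ F (ball 0 1) ∧
    MapsTo F (ball (0 : En 2) 1) (ball (0 : ℂ) 1) ∧
    (∀ z₁ ∈ ball (0 : ℂ) 1, F !₂[z₁, 0] = z₁) ∧ F w = σ}

/-! For `a ∈ 𝔻 ∖ {0}` the points `(a, 0)` and `(0, z₂)` of `𝔹₂` are orthogonal, and the complex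
line through them meets `𝔹₂` in a disc. Restricting `F` to that disc and applying Schwarz–Pick
gives `d(a, F(0, z₂))² ≤ |a|² + |z₂|² - |a|²|z₂|²` for the pseudo-hyperbolic distance `d`, since
`F(a, 0) = a`. Taking `a = -t σ/|σ|` with `σ = F(0, z₂)` and `0 < t < 1` turns this into
`((t + |σ|)/(1 + t|σ|))² ≤ t² + |z₂|² - t²|z₂|²`, and letting `t → 1` gives
`|σ|(2 - |z₂|²) ≤ |z₂|²`. -/

open ComplexConjugate

theorem normSq_one_sub_conj_mul_sub_normSq_sub (a z : ℂ) :
    normSq (1 - conj a * z) - normSq (a - z) = (1 - normSq a) * (1 - normSq z) := by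
  simp only [normSq_apply, sub_re, sub_im, mul_re, mul_im, conj_re, conj_im, one_re, one_im]
  ring

theorem normSq_sub_lt_normSq_one_sub_conj_mul {a z : ℂ} (ha : ‖a‖ < 1) (hz : ‖z‖ < 1) :
    normSq (a - z) < normSq (1 - conj a * z) := by
  have ha' : normSq a < 1 := by rw [← Complex.sq_norm]; nlinarith [norm_nonneg a]
  have hz' : normSq z < 1 := by rw [← Complex.sq_norm]; nlinarith [norm_nonneg z]
  nlinarith [normSq_one_sub_conj_mul_sub_normSq_sub a z]

theorem one_sub_conj_mul_ne_zero {a z : ℂ} (ha : ‖a‖ < 1) (hz : ‖z‖ < 1) :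
    1 - conj a * z ≠ 0 := by
  intro h
  have := normSq_sub_lt_normSq_one_sub_conj_mul ha hz
  rw [h, map_zero] at this
  exact (normSq_nonneg _).not_gt this

theorem norm_mob_lt_one {a z : ℂ} (ha : ‖a‖ < 1) (hz : ‖z‖ < 1) : ‖mob a z‖ < 1 := by
  rw [mob, norm_div, div_lt_one (norm_pos_iff.2 (one_sub_conj_mul_ne_zero ha hz)),
    ← sq_lt_sq₀ (norm_nonneg _) (norm_nonneg _), Complex.sq_norm, Complex.sq_norm]
  exact normSq_sub_lt_normSq_one_sub_conj_mul ha hz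

theorem mob_zero (a : ℂ) : mob a 0 = a := by simp [mob]

theorem mob_self (a : ℂ) : mob a a = 0 := by simp [mob]

theorem mob_mob {a z : ℂ} (ha : ‖a‖ < 1) (hz : ‖z‖ < 1) : mob a (mob a z) = z := by
  have hz' : 1 - z * conj a ≠ 0 := mul_comm (conj a) z ▸ one_sub_conj_mul_ne_zero ha hz
  rw [mob, div_eq_iff (one_sub_conj_mul_ne_zero ha (norm_mob_lt_one ha hz)), mob]
  field_simp
  ring

theorem differentiableOn_mob {a : ℂ} (ha : ‖a‖ < 1) :
    DifferentiableOn ℂ (mob a) (ball 0 1) := fun _ hz =>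
  ((differentiableAt_const a).sub differentiableAt_id).div
    ((differentiableAt_const _).sub ((differentiableAt_const _).mul differentiableAt_id))
    (one_sub_conj_mul_ne_zero ha (mem_ball_zero_iff.1 hz)) |>.differentiableWithinAt

theorem mapsTo_mob {a : ℂ} (ha : ‖a‖ < 1) : MapsTo (mob a) (ball 0 1) (ball 0 1) := fun _ hz =>
  mem_ball_zero_iff.2 (norm_mob_lt_one ha (mem_ball_zero_iff.1 hz))

-- Schwarz's lemma applied to `m_{g u} ∘ g ∘ m_u`, which fixes `0`.
theorem norm_mob_le_norm_mob {g : ℂ → ℂ} (hg : DifferentiableOn ℂ g (ball 0 1))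
    (hgm : MapsTo g (ball 0 1) (ball 0 1)) {u v : ℂ} (hu : ‖u‖ < 1) (hv : ‖v‖ < 1) :
    ‖mob (g u) (g v)‖ ≤ ‖mob u v‖ := by
  have hgu : ‖g u‖ < 1 := mem_ball_zero_iff.1 (hgm (mem_ball_zero_iff.2 hu))
  have hmaps : MapsTo (mob (g u) ∘ g ∘ mob u) (ball 0 1) (ball 0 1) :=
    (mapsTo_mob hgu).comp (hgm.comp (mapsTo_mob hu))
  have hdiff : DifferentiableOn ℂ (mob (g u) ∘ g ∘ mob u) (ball 0 1) :=
    (differentiableOn_mob hgu).comp (hg.comp (differentiableOn_mob hu) (mapsTo_mob hu))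
      (hgm.comp (mapsTo_mob hu))
  have hzero : (mob (g u) ∘ g ∘ mob u) 0 = 0 := by simp [mob_zero, mob_self]
  simpa [mob_mob hu hv] using
    norm_le_norm_of_mapsTo_ball hdiff (hmaps.mono_right ball_subset_closedBall) hzero
      (norm_mob_lt_one hu hv)

theorem mob_ofReal_mul_ofReal_mul {u : ℂ} (hu : ‖u‖ = 1) (x y : ℝ) :
    mob (x * u) (y * u) = ((x - y) / (1 - x * y) : ℝ) * u := by
  have hu' : conj u * u = 1 := by
    rw [mul_comm, mul_conj, normSq_eq_norm_sq, hu]; norm_num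
  rw [mob, map_mul, conj_ofReal, show (x : ℂ) * conj u * (y * u) = x * y * (conj u * u) by ring,
    hu', mul_one]
  push_cast
  ring

theorem mob_ofReal (x y : ℝ) : mob x y = ((x - y) / (1 - x * y) : ℝ) := by
  simpa using mob_ofReal_mul_ofReal_mul norm_one x y

section OrthogonalSlice

variable {E : Type*} [NormedAddCommGroup E] [InnerProductSpace ℂ E]

theorem sq_norm_smul_add_smul_of_inner_eq_zero {p q : E} (hpq : inner ℂ p q = 0) (x y : ℂ) :
    ‖x • p + y • q‖ ^ 2 = ‖x‖ ^ 2 * ‖p‖ ^ 2 + ‖y‖ ^ 2 * ‖q‖ ^ 2 := by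
  have h : inner ℂ (x • p) (y • q) = 0 := by rw [inner_smul_left, inner_smul_right, hpq]; simp
  simp only [sq]
  rw [norm_add_sq_eq_norm_sq_add_norm_sq_of_inner_eq_zero _ _ h,
    norm_smul, norm_smul]
  ring

theorem sq_norm_sub_mul_mul_add_sq_norm_add_mul_mul (b r s : ℝ) (w : ℂ) :
    ‖(r - s * w : ℂ)‖ ^ 2 * b + ‖(b + s * w : ℂ)‖ ^ 2 * r = (b + r) * (b * r + s ^ 2 * ‖w‖ ^ 2) := by
  simp only [Complex.sq_norm, normSq_apply, sub_re, sub_im, add_re, add_im, mul_re, mul_im,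
    ofReal_re, ofReal_im]
  ring

theorem exists_disc_through_of_inner_eq_zero {p q : E} (hpq : inner ℂ p q = 0) (hp : ‖p‖ < 1)
    (hq : ‖q‖ < 1) (hp0 : p ≠ 0) :
    ∃ ψ : ℂ → E, Differentiable ℂ ψ ∧ MapsTo ψ (ball 0 1) (ball 0 1) ∧
      ∃ u v : ℂ, ‖u‖ < 1 ∧ ‖v‖ < 1 ∧ ψ u = p ∧ ψ v = q ∧
        ‖mob u v‖ ^ 2 = ‖p‖ ^ 2 + ‖q‖ ^ 2 - ‖p‖ ^ 2 * ‖q‖ ^ 2 := by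
  set b := ‖p‖ ^ 2
  set r := ‖q‖ ^ 2
  have hb0 : 0 < b := by have := norm_pos_iff.2 hp0; positivity
  have hb1 : b < 1 := by nlinarith [norm_nonneg p]
  have hr0 : 0 ≤ r := by positivity
  have hr1 : r < 1 := by nlinarith [norm_nonneg q]
  have hbr : 0 < b + r := by positivity
  set s := √(b + r - b * r)
  have hs2 : s ^ 2 = b + r - b * r := Real.sq_sqrt (by nlinarith)
  have hs0 : 0 < s := Real.sqrt_pos.2 (by nlinarith)
  -- the affine line through `p` and `q`, reparametrized so that its slice of the ball is `𝔻`
  let ψ : ℂ → E := fun w => ((r - s * w) / (b + r) : ℂ) • p + ((b + s * w) / (b + r) : ℂ) • q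
  have hbr' : (b : ℂ) + r ≠ 0 := by exact_mod_cast hbr.ne'
  have hs' : (s : ℂ) ≠ 0 := by exact_mod_cast hs0.ne'
  refine ⟨ψ, by fun_prop, fun w hw => ?_, ((-(b / s) : ℝ) : ℂ), ((r / s : ℝ) : ℂ), ?_, ?_, ?_, ?_, ?_⟩
  · have hw : ‖w‖ < 1 := mem_ball_zero_iff.1 hw
    have hψ : ‖ψ w‖ ^ 2 = (b * r + s ^ 2 * ‖w‖ ^ 2) / (b + r) := by
      have hbr_norm : ‖(b + r : ℂ)‖ = b + r := by exact_mod_cast Real.norm_of_nonneg hbr.le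
      rw [sq_norm_smul_add_smul_of_inner_eq_zero hpq, norm_div, norm_div, hbr_norm,
        eq_div_iff hbr.ne']
      have := sq_norm_sub_mul_mul_add_sq_norm_add_mul_mul b r s w
      field_simp
      linear_combination this
    have hw2 : s ^ 2 * ‖w‖ ^ 2 < s ^ 2 := by
      have := pow_pos hs0 2
      have : ‖w‖ ^ 2 < 1 := by nlinarith [norm_nonneg w]
      nlinarith
    rw [mem_ball_zero_iff, ← sq_lt_one_iff₀ (norm_nonneg _), hψ, div_lt_one hbr]
    linarith
  · rw [Complex.norm_real, Real.norm_eq_abs, abs_neg, abs_of_pos (by positivity), div_lt_one hs0,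
      ← sq_lt_sq₀ hb0.le hs0.le]
    nlinarith
  · rw [Complex.norm_real, Real.norm_eq_abs, abs_of_nonneg (by positivity), div_lt_one hs0,
      ← sq_lt_sq₀ hr0 hs0.le]
    nlinarith
  · simp only [ψ]
    push_cast
    field_simp
    simp [add_comm (r : ℂ), hbr']
  · simp only [ψ]
    push_cast
    field_simp
    simp
  · rw [mob_ofReal, Complex.norm_real, Real.norm_eq_abs, sq_abs, ← hs2]
    have hden : 1 - -(b / s) * (r / s) = (b + r) / s ^ 2 := by
      field_simp
      linear_combination hs2
    rw [hden, show (-(b / s) - r / s) / ((b + r) / s ^ 2) = -s by field_simp; ring, neg_sq]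

theorem sq_norm_mob_le_of_inner_eq_zero {F : E → ℂ} (hF : DifferentiableOn ℂ F (ball 0 1)) (hFm : MapsTo F (ball 0 1) (ball 0 1))
    {p q : E} (hpq : inner ℂ p q = 0) (hp : ‖p‖ < 1) (hq : ‖q‖ < 1) (hp0 : p ≠ 0) :
    ‖mob (F p) (F q)‖ ^ 2 ≤ ‖p‖ ^ 2 + ‖q‖ ^ 2 - ‖p‖ ^ 2 * ‖q‖ ^ 2 := by
  obtain ⟨ψ, hψ, hψm, u, v, hu, hv, rfl, rfl, huv⟩ :=
    exists_disc_through_of_inner_eq_zero hpq hp hq hp0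
  rw [← huv]
  exact pow_le_pow_left₀ (norm_nonneg _)
    (norm_mob_le_norm_mob (hF.comp hψ.differentiableOn hψm) (hFm.comp hψm) hu hv) 2

end OrthogonalSlice
theorem le_div_two_sub_of_forall_Ioo {s r : ℝ} (hs : 0 ≤ s) (hr : r < 2)
    (h : ∀ t ∈ Ioo (0 : ℝ) 1, ((t + s) / (1 + t * s)) ^ 2 ≤ t ^ 2 + r - t ^ 2 * r) :
    s ≤ r / (2 - r) := by
  -- `(t + s)² - t²(1 + ts)² = (1 - t²) s (2t + s(1 + t²))`
  have hpoly : ∀ t ∈ Ioo (0 : ℝ) 1, 0 ≤ r * (1 + t * s) ^ 2 - s * (2 * t + s * (1 + t ^ 2)) := by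
    rintro t ⟨ht0, ht1⟩
    have h1 := h t ⟨ht0, ht1⟩
    rw [div_pow, div_le_iff₀ (by positivity)] at h1
    have ht2 : 0 < 1 - t ^ 2 := by nlinarith
    refine nonneg_of_mul_nonneg_right ?_ ht2
    linear_combination h1
  have hlim : 0 ≤ r * (1 + 1 * s) ^ 2 - s * (2 * 1 + s * (1 + 1 ^ 2)) :=
    ge_of_tendsto ((Continuous.tendsto (by fun_prop) 1).mono_left (nhdsWithin_le_nhds (s := Iio 1)))
      (Filter.mem_of_superset (Ioo_mem_nhdsLT zero_lt_one) hpoly)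
  rw [le_div_iff₀ (by linarith)]
  nlinarith

theorem norm_pair_zero_right (x : ℂ) : ‖(!₂[x, 0] : En 2)‖ = ‖x‖ := by
  simp [EuclideanSpace.norm_eq, Fin.sum_univ_two]

theorem norm_pair_zero_left (y : ℂ) : ‖(!₂[0, y] : En 2)‖ = ‖y‖ := by
  simp [EuclideanSpace.norm_eq, Fin.sum_univ_two]

theorem inner_pair_zero_right_pair_zero_left (x y : ℂ) :
    inner ℂ (!₂[x, 0] : En 2) !₂[0, y] = 0 := by
  simp [PiLp.inner_apply, Fin.sum_univ_two]

theorem stmt_4 (F : En 2 → ℂ) (hF : DifferentiableOn ℂ F (ball 0 1))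
    (hFm : MapsTo F (ball (0 : En 2) 1) (ball (0 : ℂ) 1))
    (hfix : ∀ z₁ ∈ ball (0 : ℂ) 1, F !₂[z₁, 0] = z₁) :
    ∀ z₂ ∈ ball (0 : ℂ) 1,
      ‖F !₂[0, z₂]‖ ≤ (‖z₂‖) ^ 2 / (2 - (‖z₂‖) ^ 2) := by
  intro z₂ hz₂
  have hq : ‖(!₂[0, z₂] : En 2)‖ < 1 := by rwa [norm_pair_zero_left, ← mem_ball_zero_iff]
  set σ := F !₂[0, z₂] with hσdef
  set u := exp (arg σ * I)
  have hu : ‖u‖ = 1 := norm_exp_ofReal_mul_I _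
  have hσ : σ = ‖σ‖ * u := (norm_mul_exp_arg_mul_I σ).symm
  refine le_div_two_sub_of_forall_Ioo (norm_nonneg σ)
    (by nlinarith [norm_nonneg z₂, mem_ball_zero_iff.1 hz₂]) fun t ⟨ht0, ht1⟩ => ?_
  have hp : ‖(!₂[(-t : ℝ) * u, 0] : En 2)‖ = t := by
    rw [norm_pair_zero_right, norm_mul, hu, mul_one, Complex.norm_real, Real.norm_eq_abs, abs_neg,
      abs_of_pos ht0]
  have key := sq_norm_mob_le_of_inner_eq_zero hF hFm (inner_pair_zero_right_pair_zero_left _ z₂)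
    (by rwa [hp]) hq (norm_pos_iff.1 (by rwa [hp]))
  rw [hfix _ (mem_ball_zero_iff.2 (by rwa [← norm_pair_zero_right, hp])), ← hσdef, hσ,
    mob_ofReal_mul_ofReal_mul hu, norm_mul, hu, mul_one, Complex.norm_real, Real.norm_eq_abs,
    sq_abs, hp, norm_pair_zero_left,
    show (-t - ‖σ‖) / (1 - -t * ‖σ‖) = -((t + ‖σ‖) / (1 + t * ‖σ‖)) by ring, neg_sq] at key
  exact key
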